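/- Let Δ ∈ (0,1), σ > 0, μ ∈ ℝ^d, and let p(x) := (1/2)N(x; μ, σ²I_d) + (1/2)N(x; −μ, σ²I_d) be the balanced binary isotropic Gaussian mixture density. Set τ² := (1−Δ)σ² + Δ. Then for every y ∈ ℝ^d, ∫_{ℝ^d} x·p(x)·N(y − √(1−Δ)x; 0, Δ·I_d) dx = [ (√(1−Δ)σ²/τ²)·y + (Δ/τ²)·tanh(√(1−Δ)·yᵀμ/τ²)·μ ] · ∫_{ℝ^d} p(x)·N(y − √(1−Δ)x; 0, Δ·I_d) dx. That is, the oracle (posterior-mean) denoiser for this mixture is t(y) = b·y + (Δ/τ²)·tanh(√(1−Δ)yᵀμ/τ²)·μ with b = √(1−Δ)σ²/τ². -/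

import Mathlib

open MeasureTheory Matrix

/-- The Gaussian density `N(y; m, C)` on `ℝ^d` with mean `m` and covariance `C`. -/
noncomputable def gaussDensity {d : ℕ} (m : Fin d → ℝ) (C : Matrix (Fin d) (Fin d) ℝ)
    (y : Fin d → ℝ) : ℝ :=
  (2 * Real.pi) ^ (-(d : ℝ) / 2) * C.det ^ (-(1 : ℝ) / 2) *
    Real.exp (-((y - m) ⬝ᵥ (C⁻¹ *ᵥ (y - m))) / 2)

/-- One-dimensional Gaussian density with variance `c` and mean `m`. -/
noncomputable def g1 (c m x : ℝ) : ℝ :=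
  (2 * Real.pi * c) ^ (-(1 : ℝ) / 2) * Real.exp (-(x - m) ^ 2 / (2 * c))

lemma g1_eq_pdf {c : ℝ} (hc : 0 < c) (m : ℝ) :
    g1 c m = ProbabilityTheory.gaussianPDFReal m ⟨c, hc.le⟩ := by
  funext x
  have h2 : (0:ℝ) ≤ 2 * Real.pi * c := by positivity
  rw [g1]
  show _ = (√(2 * Real.pi * ((⟨c, hc.le⟩ : NNReal) : ℝ)))⁻¹ *
    Real.exp (-(x - m) ^ 2 / (2 * ((⟨c, hc.le⟩ : NNReal) : ℝ)))
  congr 1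
  rw [show (-(1:ℝ)/2) = -(1/2) by norm_num, Real.rpow_neg h2, ← Real.sqrt_eq_rpow]

lemma g1_integrable {c : ℝ} (hc : 0 < c) (m : ℝ) : Integrable (g1 c m) := by
  rw [g1_eq_pdf hc]; exact ProbabilityTheory.integrable_gaussianPDFReal m _

lemma g1_int_one {c : ℝ} (hc : 0 < c) (m : ℝ) : ∫ x, g1 c m x = 1 := by
  rw [g1_eq_pdf hc]
  exact ProbabilityTheory.integral_gaussianPDFReal_eq_one m
    (fun h => hc.ne' (congrArg NNReal.toReal h))

lemma g1_shift (c m x : ℝ) : g1 c m x = g1 c 0 (x - m) := by simp [g1]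

lemma g1_integrable_mul0 {c : ℝ} (hc : 0 < c) :
    Integrable (fun x : ℝ => g1 c 0 x * x) := by
  have h0 := (integrable_mul_exp_neg_mul_sq
    (show (0:ℝ) < 1/(2*c) by positivity)).const_mul ((2*Real.pi*c) ^ (-(1:ℝ)/2))
  refine h0.congr (Filter.Eventually.of_forall fun x => ?_)
  simp only [g1]
  rw [show -(x-0:ℝ)^2/(2*c) = -(1/(2*c))*x^2 by ring]
  ring

lemma g1_integrable_mul {c : ℝ} (hc : 0 < c) (m : ℝ) :
    Integrable (fun x => g1 c m x * x) := by
  have hf : Integrable (fun t : ℝ => g1 c 0 t * (t + m)) := by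
    have := (g1_integrable_mul0 hc).add ((g1_integrable hc 0).mul_const m)
    refine this.congr (Filter.Eventually.of_forall fun x => ?_)
    simp only [Pi.add_apply]
    ring
  refine (hf.comp_sub_right m).congr (Filter.Eventually.of_forall fun x => ?_)
  simp only []
  rw [← g1_shift, sub_add_cancel]

lemma g1_int_mul {c : ℝ} (hc : 0 < c) (m : ℝ) : ∫ x, g1 c m x * x = m := by
  have h0 : ∫ x : ℝ, g1 c 0 x * x = 0 := by
    have hodd : ∀ x : ℝ, g1 c 0 (-x) * (-x) = -(g1 c 0 x * x) := by
      intro x; simp [g1, neg_sq]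
    have h := MeasureTheory.integral_neg_eq_self (fun x : ℝ => g1 c 0 x * x) volume
    simp only [hodd, integral_neg] at h
    linarith
  calc ∫ x, g1 c m x * x = ∫ x, (fun t => g1 c 0 t * (t + m)) (x - m) := by
        congr 1; funext x
        show g1 c m x * x = g1 c 0 (x - m) * (x - m + m)
        rw [← g1_shift, sub_add_cancel]
    _ = ∫ x, g1 c 0 x * (x + m) := by
        rw [integral_sub_right_eq_self (fun t => g1 c 0 t * (t + m)) m]
    _ = (∫ x, g1 c 0 x * x) + (∫ x, g1 c 0 x) * m := by
        rw [← integral_mul_const, ← integral_add (g1_integrable_mul0 hc)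
          ((g1_integrable hc 0).mul_const m)]
        congr 1; funext x; ring
    _ = m := by rw [h0, g1_int_one hc]; ring

section Pi

variable {d : ℕ} {c : ℝ}

lemma piG_integrable (hc : 0 < c) (m : Fin d → ℝ) :
    Integrable (fun x : Fin d → ℝ => ∏ i, g1 c (m i) (x i)) :=
  Integrable.fintype_prod (fun i => g1_integrable hc (m i))

lemma piG_int_one (hc : 0 < c) (m : Fin d → ℝ) :
    ∫ x : Fin d → ℝ, ∏ i, g1 c (m i) (x i) = 1 := by
  rw [integral_fintype_prod_volume_eq_prod (f := fun i t => g1 c (m i) t)]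
  simp [g1_int_one hc]

lemma piG_coord (hc : 0 < c) (m : Fin d → ℝ) (j : Fin d) :
    (fun x : Fin d → ℝ => (∏ i, g1 c (m i) (x i)) * x j)
    = fun x : Fin d → ℝ =>
        ∏ i, Function.update (fun i t => g1 c (m i) t) j (fun t => g1 c (m j) t * t) i (x i) := by
  funext x
  rw [← Finset.mul_prod_erase Finset.univ _ (Finset.mem_univ j),
      ← Finset.mul_prod_erase Finset.univ
        (fun i => Function.update (fun i t => g1 c (m i) t) j (fun t => g1 c (m j) t * t) i (x i))
        (Finset.mem_univ j)]
  rw [Function.update_self]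
  have h : ∏ i ∈ Finset.univ.erase j,
      Function.update (fun i t => g1 c (m i) t) j (fun t => g1 c (m j) t * t) i (x i)
      = ∏ i ∈ Finset.univ.erase j, g1 c (m i) (x i) :=
    Finset.prod_congr rfl (fun i hi => by
      rw [Function.update_of_ne (Finset.ne_of_mem_erase hi)])
  rw [h]
  ring

lemma piG_coord_integrable (hc : 0 < c) (m : Fin d → ℝ) (j : Fin d) :
    Integrable (fun x : Fin d → ℝ => (∏ i, g1 c (m i) (x i)) * x j) := by
  rw [piG_coord hc]
  refine Integrable.fintype_prod (fun i => ?_)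
  rcases eq_or_ne i j with rfl | h
  · simpa [Function.update_self] using g1_integrable_mul hc (m i)
  · simpa [Function.update_of_ne h] using g1_integrable hc (m i)

lemma piG_coord_int (hc : 0 < c) (m : Fin d → ℝ) (j : Fin d) :
    ∫ x : Fin d → ℝ, (∏ i, g1 c (m i) (x i)) * x j = m j := by
  rw [piG_coord hc, integral_fintype_prod_volume_eq_prod]
  rw [← Finset.mul_prod_erase Finset.univ _ (Finset.mem_univ j), Function.update_self,
    g1_int_mul hc]
  rw [Finset.prod_congr rfl (fun i hi => by
    rw [Function.update_of_ne (Finset.ne_of_mem_erase hi), g1_int_one hc])]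
  simp

lemma piG_smul_decomp (f : (Fin d → ℝ) → ℝ) :
    (fun x : Fin d → ℝ => f x • x)
      = fun x => ∑ j, (f x * x j) • (Pi.single j (1:ℝ) : Fin d → ℝ) := by
  funext x
  funext k
  simp [Finset.sum_apply, Pi.single_apply, mul_ite, Finset.sum_ite_eq']

lemma piG_moment_integrable (hc : 0 < c) (m : Fin d → ℝ) :
    Integrable (fun x : Fin d → ℝ => (∏ i, g1 c (m i) (x i)) • x) := by
  rw [piG_smul_decomp]
  exact integrable_finset_sum _ (fun j _ => (piG_coord_integrable hc m j).smul_const _)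

lemma piG_moment (hc : 0 < c) (m : Fin d → ℝ) :
    ∫ x : Fin d → ℝ, (∏ i, g1 c (m i) (x i)) • x = m := by
  rw [piG_smul_decomp]
  rw [integral_finset_sum _ (fun j _ => (piG_coord_integrable hc m j).smul_const _)]
  simp_rw [integral_smul_const, piG_coord_int hc]
  funext k
  simp [Finset.sum_apply, Pi.single_apply, mul_ite, Finset.sum_ite_eq']

end Pi

lemma gaussDensity_smul_one {d : ℕ} {c : ℝ} (hc : 0 < c) (m x : Fin d → ℝ) :
    gaussDensity m (c • (1 : Matrix (Fin d) (Fin d) ℝ)) x = ∏ i, g1 c (m i) (x i) := by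
  have hinv : (c • (1 : Matrix (Fin d) (Fin d) ℝ))⁻¹ = c⁻¹ • 1 := by
    apply Matrix.inv_eq_right_inv
    rw [Matrix.smul_mul, Matrix.mul_smul, one_mul, smul_smul, mul_inv_cancel₀ hc.ne', one_smul]
  have hdet : (c • (1 : Matrix (Fin d) (Fin d) ℝ)).det = c ^ d := by
    simp [Matrix.det_smul]
  rw [gaussDensity, hinv, hdet]
  have hquad : (x - m) ⬝ᵥ ((c⁻¹ • (1 : Matrix (Fin d) (Fin d) ℝ)) *ᵥ (x - m))
      = c⁻¹ * ∑ i, (x i - m i) ^ 2 := by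
    rw [Matrix.smul_mulVec, Matrix.one_mulVec, dotProduct_smul]
    simp [dotProduct, Finset.mul_sum, sq, Pi.sub_apply]
  rw [hquad]
  have hexp : Real.exp (-(c⁻¹ * ∑ i, (x i - m i) ^ 2) / 2)
      = ∏ i, Real.exp (-(x i - m i) ^ 2 / (2 * c)) := by
    rw [← Real.exp_sum]
    congr 1
    have h : ∀ i ∈ Finset.univ, -(x i - m i)^2/(2*c) = (x i - m i)^2 * (-(2*c)⁻¹) :=
      fun i _ => by rw [div_eq_mul_inv]; ring
    rw [Finset.sum_congr rfl h, ← Finset.sum_mul, mul_inv]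
    ring
  rw [hexp]
  simp only [g1]
  rw [Finset.prod_mul_distrib, Finset.prod_const, Finset.card_univ, Fintype.card_fin]
  congr 1
  have h2π : (0:ℝ) ≤ 2*Real.pi := by positivity
  have A : (2*Real.pi:ℝ)^(-(d:ℝ)/2) = ((2*Real.pi:ℝ)^(-(1:ℝ)/2))^(d:ℕ) := by
    rw [← Real.rpow_natCast ((2*Real.pi:ℝ)^(-(1:ℝ)/2)) d, ← Real.rpow_mul h2π]
    congr 1; ring
  have B : ((c:ℝ)^(d:ℕ))^(-(1:ℝ)/2) = (c^(-(1:ℝ)/2))^(d:ℕ) := by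
    rw [← Real.rpow_natCast c d, ← Real.rpow_mul hc.le,
      ← Real.rpow_natCast (c^(-(1:ℝ)/2)) d, ← Real.rpow_mul hc.le]
    congr 1; ring
  rw [A, B, ← mul_pow, ← Real.mul_rpow h2π hc.le]

lemma g1_combine {v Δ : ℝ} (hv : 0 < v) (hΔ : 0 < Δ) (s Y M t : ℝ) :
    g1 v M t * g1 Δ 0 (Y - s * t)
      = g1 (s^2*v + Δ) (s*M) Y * g1 (v*Δ/(s^2*v + Δ)) ((s*v*Y + Δ*M)/(s^2*v + Δ)) t := by
  have hT : 0 < s^2*v + Δ := by positivity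
  have hC : 0 < v*Δ/(s^2*v + Δ) := by positivity
  simp only [g1]
  conv_lhs => rw [mul_mul_mul_comm]
  conv_rhs => rw [mul_mul_mul_comm]
  congr 1
  · rw [← Real.mul_rpow (by positivity) (by positivity),
        ← Real.mul_rpow (by positivity) (by positivity)]
    congr 1
    field_simp
  · rw [← Real.exp_add, ← Real.exp_add]
    congr 1
    field_simp
    ring

/-- The oracle (posterior-mean) denoiser of the balanced binary isotropic Gaussian mixture
`(1/2)N(μ, σ²I) + (1/2)N(−μ, σ²I)` under the channel `x̃ = √(1−Δ)x + √Δξ` is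
`t(y) = b·y + (Δ/τ²)·tanh(√(1−Δ)yᵀμ/τ²)·μ` with `b = √(1−Δ)σ²/τ²`, `τ² = (1−Δ)σ² + Δ`. -/
theorem binary_mixture_oracle_denoiser {d : ℕ} (Δ : ℝ) (hΔ : Δ ∈ Set.Ioo (0 : ℝ) 1)
    (σ : ℝ) (hσ : 0 < σ) (μ : Fin d → ℝ) (y : Fin d → ℝ) :
    (∫ x : Fin d → ℝ,
        (((1 / 2) * gaussDensity μ (σ ^ 2 • (1 : Matrix (Fin d) (Fin d) ℝ)) x +
            (1 / 2) * gaussDensity (-μ) (σ ^ 2 • (1 : Matrix (Fin d) (Fin d) ℝ)) x) *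
          gaussDensity 0 (Δ • (1 : Matrix (Fin d) (Fin d) ℝ)) (y - Real.sqrt (1 - Δ) • x)) • x)
      =
    (∫ x : Fin d → ℝ,
        ((1 / 2) * gaussDensity μ (σ ^ 2 • (1 : Matrix (Fin d) (Fin d) ℝ)) x +
            (1 / 2) * gaussDensity (-μ) (σ ^ 2 • (1 : Matrix (Fin d) (Fin d) ℝ)) x) *
          gaussDensity 0 (Δ • (1 : Matrix (Fin d) (Fin d) ℝ)) (y - Real.sqrt (1 - Δ) • x)) •
      ((Real.sqrt (1 - Δ) * σ ^ 2 / ((1 - Δ) * σ ^ 2 + Δ)) • y +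
        (Δ / ((1 - Δ) * σ ^ 2 + Δ) *
          Real.tanh (Real.sqrt (1 - Δ) * (y ⬝ᵥ μ) / ((1 - Δ) * σ ^ 2 + Δ))) • μ) := by
  obtain ⟨hΔ0, hΔ1⟩ := hΔ
  have hv : (0:ℝ) < σ^2 := by positivity
  set s : ℝ := Real.sqrt (1 - Δ) with hs
  have hs2 : s^2 = 1 - Δ := Real.sq_sqrt (by linarith)
  rw [← hs2]
  have hT0 : (0:ℝ) < s^2*σ^2 + Δ := by positivity
  have hC0 : (0:ℝ) < σ^2*Δ/(s^2*σ^2 + Δ) := by positivity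
  -- abbreviations (as plain terms)
  set T : ℝ := s^2*σ^2 + Δ with hT
  set C : ℝ := σ^2*Δ/T with hC
  set mp : Fin d → ℝ := fun i => (s*σ^2*(y i) + Δ*(μ i))/T with hmp
  set mm : Fin d → ℝ := fun i => (s*σ^2*(y i) + Δ*(-μ i))/T with hmm
  set Kp : ℝ := (1/2) * ∏ i, g1 T (s*(μ i)) (y i) with hKp
  set Km : ℝ := (1/2) * ∏ i, g1 T (s*(-μ i)) (y i) with hKm
  clear_value s T C mp mm Kp Km
  -- rewrite the weight function
  have hw : ∀ x : Fin d → ℝ,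
      ((1 / 2) * gaussDensity μ (σ ^ 2 • (1 : Matrix (Fin d) (Fin d) ℝ)) x +
          (1 / 2) * gaussDensity (-μ) (σ ^ 2 • (1 : Matrix (Fin d) (Fin d) ℝ)) x) *
        gaussDensity 0 (Δ • (1 : Matrix (Fin d) (Fin d) ℝ)) (y - s • x)
      = Kp * ∏ i, g1 C (mp i) (x i) + Km * ∏ i, g1 C (mm i) (x i) := by
    intro x
    rw [gaussDensity_smul_one hv, gaussDensity_smul_one hv, gaussDensity_smul_one hΔ0]
    simp only [Pi.zero_apply, Pi.sub_apply, Pi.smul_apply, smul_eq_mul, Pi.neg_apply]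
    have hp : (∏ i, g1 (σ^2) (μ i) (x i)) * ∏ i, g1 Δ 0 (y i - s * x i)
        = (∏ i, g1 T (s*(μ i)) (y i)) * ∏ i, g1 C (mp i) (x i) := by
      rw [← Finset.prod_mul_distrib, ← Finset.prod_mul_distrib]
      refine Finset.prod_congr rfl fun i _ => ?_
      have h := g1_combine hv hΔ0 s (y i) (μ i) (x i)
      rw [← hT, ← hC] at h
      rw [hmp]
      exact h
    have hq : (∏ i, g1 (σ^2) (-(μ i)) (x i)) * ∏ i, g1 Δ 0 (y i - s * x i)
        = (∏ i, g1 T (s*(-(μ i))) (y i)) * ∏ i, g1 C (mm i) (x i) := by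
      rw [← Finset.prod_mul_distrib, ← Finset.prod_mul_distrib]
      refine Finset.prod_congr rfl fun i _ => ?_
      have h := g1_combine hv hΔ0 s (y i) (-(μ i)) (x i)
      rw [← hT, ← hC] at h
      rw [hmm]
      exact h
    rw [hKp, hKm, add_mul]
    rw [mul_assoc, mul_assoc, hp, hq]
    ring
  simp only [hw]
  -- compute the two integrals
  have hint1 : Integrable (fun x : Fin d → ℝ => Kp • ((∏ i, g1 C (mp i) (x i)) • x)) :=
    (piG_moment_integrable hC0 mp).smul Kp
  have hint2 : Integrable (fun x : Fin d → ℝ => Km • ((∏ i, g1 C (mm i) (x i)) • x)) :=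
    (piG_moment_integrable hC0 mm).smul Km
  have hLHS : (∫ x : Fin d → ℝ,
      (Kp * ∏ i, g1 C (mp i) (x i) + Km * ∏ i, g1 C (mm i) (x i)) • x) = Kp • mp + Km • mm := by
    have hfun : (fun x : Fin d → ℝ =>
        (Kp * ∏ i, g1 C (mp i) (x i) + Km * ∏ i, g1 C (mm i) (x i)) • x)
        = fun x => Kp • ((∏ i, g1 C (mp i) (x i)) • x) + Km • ((∏ i, g1 C (mm i) (x i)) • x) := by
      funext x
      rw [add_smul, mul_smul Kp, mul_smul Km]
    rw [hfun, integral_add hint1 hint2, integral_smul, integral_smul,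
      piG_moment hC0, piG_moment hC0]
  have hRHS : (∫ x : Fin d → ℝ,
      Kp * ∏ i, g1 C (mp i) (x i) + Km * ∏ i, g1 C (mm i) (x i)) = Kp + Km := by
    rw [integral_add ((piG_integrable hC0 mp).const_mul Kp)
      ((piG_integrable hC0 mm).const_mul Km), integral_const_mul, integral_const_mul,
      piG_int_one hC0, piG_int_one hC0, mul_one, mul_one]
  rw [hLHS, hRHS]
  -- final algebra
  have hmp' : mp = (s*σ^2/T) • y + (Δ/T) • μ := by
    funext i
    simp only [hmp, Pi.add_apply, Pi.smul_apply, smul_eq_mul]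
    field_simp [hT0.ne']
  have hmm' : mm = (s*σ^2/T) • y - (Δ/T) • μ := by
    funext i
    simp only [hmm, Pi.sub_apply, Pi.smul_apply, smul_eq_mul]
    field_simp [hT0.ne']
    ring
  have hK : Kp - Km = (Kp + Km) * Real.tanh (s * (y ⬝ᵥ μ) / T) := by
    set a : ℝ := s * (y ⬝ᵥ μ) / T with ha
    set P : ℝ := (1/2) * ((2*Real.pi*T) ^ (-(1:ℝ)/2))^d
        * Real.exp (-(∑ i, ((y i)^2 + s^2*(μ i)^2))/(2*T)) with hP
    have key : ∀ ε : ℝ, ε^2 = 1 →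
        (1/2) * ∏ i, g1 T (s*(ε * μ i)) (y i) = P * Real.exp (ε * a) := by
      intro ε hε
      simp only [g1]
      rw [Finset.prod_mul_distrib, Finset.prod_const, Finset.card_univ, Fintype.card_fin,
        ← Real.exp_sum]
      have hterm : ∀ i ∈ Finset.univ, -(y i - s*(ε*μ i))^2/(2*T)
          = ((y i)^2 + s^2*(μ i)^2) * (-(2*T)⁻¹) + (y i * μ i) * (ε*s/T) := by
        intro i _
        have h2T : (2*T) ≠ 0 := by positivity
        field_simp
        linear_combination (-s^2*(μ i)^2) * hε
      have hsum : ∑ i, -(y i - s*(ε*μ i))^2/(2*T)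
          = -(∑ i, ((y i)^2 + s^2*(μ i)^2))/(2*T) + ε * a := by
        rw [Finset.sum_congr rfl hterm, Finset.sum_add_distrib, ← Finset.sum_mul,
          ← Finset.sum_mul, ha, dotProduct]
        field_simp
      rw [hsum, Real.exp_add, hP]
      ring
    have hεp := key 1 (by norm_num)
    have hεm := key (-1) (by norm_num)
    simp only [one_mul, neg_one_mul] at hεp hεm
    rw [hKp, hKm, hεp, hεm]
    have hcosh : (0:ℝ) < Real.exp a + Real.exp (-a) := by positivity
    rw [Real.tanh_eq_sinh_div_cosh, Real.sinh_eq, Real.cosh_eq]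
    field_simp
  rw [hmp', hmm']
  have goal' : Kp • ((s*σ^2/T) • y + (Δ/T) • μ) + Km • ((s*σ^2/T) • y - (Δ/T) • μ)
      = (Kp + Km) • ((s*σ^2/T) • y +
          (Δ/T * Real.tanh (s * (y ⬝ᵥ μ) / T)) • μ) := by
    have expand : ∀ a b : ℝ, ∀ u w : Fin d → ℝ,
        Kp • (a • u + b • w) + Km • (a • u - b • w)
          = ((Kp + Km) * a) • u + ((Kp - Km) * b) • w := by
      intro a b u w
      module
    rw [expand, hK]
    simp only [smul_add, smul_smul]
    congr 1
    congr 1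
    ring
  exact goal'
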